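/- arXiv:2506.02655 — 5 statements merged into one kernel-verified Lean document; each statement's English description precedes it below -/
import Mathlib

section
/- In any Bayesian valid utility game whose prior ρ is independent (a product distribution), every strategic-form coarse correlated equilibrium σ satisfies E_{θ∼ρ}[E_{s∼σ}[SW(s(θ))]] ≥ (1/2) · OPT; that is, the price of anarchy for strategic-form coarse correlated equilibria is at least 1/2 in the independent case. -/
open Finset

/-- A set function is monotone if it is nondecreasing with respect to inclusion. -/
def MonotoneFn {α : Type*} (f : Finset α → ℝ) : Prop :=
  ∀ ⦃X Y : Finset α⦄, X ⊆ Y → f X ≤ f Y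

/-- A set function is submodular if marginal gains diminish as the set grows. -/
def SubmodularFn {α : Type*} [DecidableEq α] (f : Finset α → ℝ) : Prop :=
  ∀ ⦃X Y : Finset α⦄, X ⊆ Y → ∀ u, u ∉ Y → f (insert u Y) - f Y ≤ f (insert u X) - f X

/-- `OPT = E_{θ∼ρ}[max_{a ∈ A^θ} SW a]`, where `SW a = f {a_1, …, a_n}`. -/
noncomputable def gOPT {n : ℕ} {Θ : Fin n → Type*} [∀ i, Fintype (Θ i)] [∀ i, DecidableEq (Θ i)]
    {E : Type*} [Fintype E] [DecidableEq E]
    (Act : ∀ i, Θ i → Finset E) (hAne : ∀ i t, (Act i t).Nonempty)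
    (ρ : (∀ i, Θ i) → ℝ) (f : Finset E → ℝ) : ℝ :=
  ∑ θ : ∀ i, Θ i, ρ θ *
    (Fintype.piFinset fun i => Act i (θ i)).sup'
      (Fintype.piFinset_nonempty.mpr fun i => hAne i (θ i))
      (fun a => f (Finset.univ.image a))

/-- `STR = max_{s ∈ S} E_{θ∼ρ}[SW (s θ)]`, the maximum over strategy profiles. -/
noncomputable def gSTR {n : ℕ} {Θ : Fin n → Type*} [∀ i, Fintype (Θ i)] [∀ i, DecidableEq (Θ i)]
    {E : Type*} [Fintype E] [DecidableEq E]
    (Act : ∀ i, Θ i → Finset E) (hAne : ∀ i t, (Act i t).Nonempty)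
    (ρ : (∀ i, Θ i) → ℝ) (f : Finset E → ℝ) : ℝ :=
  (Fintype.piFinset fun i => Fintype.piFinset fun t : Θ i => Act i t).sup'
    (Fintype.piFinset_nonempty.mpr fun i => Fintype.piFinset_nonempty.mpr fun t => hAne i t)
    (fun s => ∑ θ : ∀ i, Θ i, ρ θ * f (Finset.univ.image fun i => s i (θ i)))


lemma image_update_univ {n : ℕ} {E : Type*} [DecidableEq E] (a : Fin n → E) (i : Fin n) (x : E) :
    Finset.univ.image (Function.update a i x) = insert x ((Finset.univ.erase i).image a) := by
  ext e
  constructor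
  · intro he
    obtain ⟨j, -, rfl⟩ := mem_image.mp he
    rcases eq_or_ne j i with h | h
    · subst h; rw [Function.update_self]; exact mem_insert_self _ _
    · rw [Function.update_of_ne h]
      exact mem_insert_of_mem (mem_image.mpr ⟨j, mem_erase.mpr ⟨h, mem_univ j⟩, rfl⟩)
  · intro he
    rcases mem_insert.mp he with h | h
    · exact mem_image.mpr ⟨i, mem_univ i, by rw [Function.update_self, h]⟩
    · obtain ⟨j, hj, rfl⟩ := mem_image.mp h
      exact mem_image.mpr ⟨j, mem_univ j, Function.update_of_ne (mem_erase.mp hj).1 x a⟩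

lemma telescope_aux {E : Type*} [DecidableEq E] {n : ℕ}
    (f : Finset E → ℝ) (hmono : MonotoneFn f) (hsub : SubmodularFn f)
    (a b : Fin n → E) (T : Finset (Fin n)) :
    f (Finset.univ.image a ∪ T.image b) - f (Finset.univ.image a)
      ≤ ∑ i ∈ T, (f (insert (b i) ((Finset.univ.erase i).image a)) - f ((Finset.univ.erase i).image a)) := by
  induction T using Finset.induction_on with
  | empty => simp
  | @insert i T hi ih =>
    rw [Finset.image_insert, Finset.union_insert, Finset.sum_insert hi]
    have hAiY : (Finset.univ.erase i).image a ⊆ Finset.univ.image a ∪ T.image b :=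
      (Finset.image_subset_image (Finset.erase_subset _ _)).trans Finset.subset_union_left
    have key : f (insert (b i) (Finset.univ.image a ∪ T.image b)) - f (Finset.univ.image a ∪ T.image b)
        ≤ f (insert (b i) ((Finset.univ.erase i).image a)) - f ((Finset.univ.erase i).image a) := by
      by_cases hb : b i ∈ Finset.univ.image a ∪ T.image b
      · rw [Finset.insert_eq_self.mpr hb]
        have := hmono (Finset.subset_insert (b i) ((Finset.univ.erase i).image a))
        linarith
      · exact hsub hAiY _ hb
    linarith

lemma sum_swap4 {α β γ δ : Type*} [Fintype α] [Fintype β] [Fintype γ] [Fintype δ]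
    (g : α → β → γ → δ → ℝ) :
    ∑ a, ∑ b, ∑ c, ∑ d, g a b c d = ∑ d, ∑ a, ∑ b, ∑ c, g a b c d := by
  calc ∑ a, ∑ b, ∑ c, ∑ d, g a b c d
      = ∑ a, ∑ b, ∑ d, ∑ c, g a b c d :=
        Finset.sum_congr rfl fun a _ => Finset.sum_congr rfl fun b _ => Finset.sum_comm
    _ = ∑ a, ∑ d, ∑ b, ∑ c, g a b c d :=
        Finset.sum_congr rfl fun a _ => Finset.sum_comm
    _ = ∑ d, ∑ a, ∑ b, ∑ c, g a b c d := Finset.sum_comm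

lemma sum_swap3 {α β δ : Type*} [Fintype α] [Fintype β] [Fintype δ]
    (g : δ → α → β → ℝ) :
    ∑ d, ∑ a, ∑ b, g d a b = ∑ a, ∑ b, ∑ d, g d a b := by
  calc ∑ d, ∑ a, ∑ b, g d a b
      = ∑ a, ∑ d, ∑ b, g d a b := Finset.sum_comm
    _ = ∑ a, ∑ b, ∑ d, g d a b := Finset.sum_congr rfl fun a _ => Finset.sum_comm


/-- In any Bayesian valid utility game whose prior is independent
(a product distribution), every strategic-form coarse correlated equilibrium `σ`
satisfies `E_{θ∼ρ}[E_{s∼σ}[SW (s θ)]] ≥ (1/2) · OPT`: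
the price of anarchy for SFCCEs is at least `1/2` in the independent case. -/
theorem sfcce_poa_independent
    {n : ℕ} {Θ : Fin n → Type*} [∀ i, Fintype (Θ i)] [∀ i, DecidableEq (Θ i)]
    [∀ i, Nonempty (Θ i)]
    {E : Type*} [Fintype E] [DecidableEq E]
    (Act : ∀ i, Θ i → Finset E) (hAne : ∀ i t, (Act i t).Nonempty)
    (hdisj : ∀ p q : Σ i : Fin n, Θ i, p ≠ q → Disjoint (Act p.1 p.2) (Act q.1 q.2))
    (ρ : (∀ i, Θ i) → ℝ) (hρ0 : ∀ θ, 0 ≤ ρ θ) (hρ1 : ∑ θ, ρ θ = 1)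
    (ρi : ∀ i, Θ i → ℝ) (hρi0 : ∀ i t, 0 ≤ ρi i t) (hρi1 : ∀ i, ∑ t, ρi i t = 1)
    (hprod : ∀ θ, ρ θ = ∏ i, ρi i (θ i))
    (f : Finset E → ℝ) (hf0 : ∀ X, 0 ≤ f X)
    (hmono : MonotoneFn f) (hsub : SubmodularFn f)
    -- valid utility game: utilities, total utility and marginal contribution conditions
    (v : Fin n → (Fin n → E) → ℝ) (hv0 : ∀ i a, 0 ≤ v i a)
    (htotal : ∀ a : Fin n → E, (∀ i, ∃ t, a i ∈ Act i t) →
      ∑ i, v i a ≤ f (Finset.univ.image a))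
    (hmarg : ∀ a : Fin n → E, (∀ i, ∃ t, a i ∈ Act i t) → ∀ i,
      f (Finset.univ.image a) - f ((Finset.univ.image a).erase (a i)) ≤ v i a)
    -- σ is a distribution over strategy profiles
    (σ : (∀ i, Θ i → E) → ℝ)
    (hσ0 : ∀ s, 0 ≤ σ s) (hσ1 : ∑ s, σ s = 1)
    (hσsupp : ∀ s, σ s ≠ 0 → ∀ i t, s i t ∈ Act i t)
    -- σ is a strategic-form coarse correlated equilibrium
    (hSFCCE : ∀ i : Fin n, ∀ sᵢ' : Θ i → E, (∀ t, sᵢ' t ∈ Act i t) →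
      ∑ θ, ρ θ * ∑ s, σ s * v i (Function.update (fun j => s j (θ j)) i (sᵢ' (θ i)))
        ≤ ∑ θ, ρ θ * ∑ s, σ s * v i (fun j => s j (θ j))) :
    (1 / 2) * gOPT Act hAne ρ f
      ≤ ∑ θ, ρ θ * ∑ s, σ s * f (Finset.univ.image fun j => s j (θ j)) := by
  classical
  -- choose an optimal action profile for each type profile
  have hoptex : ∀ θ : ∀ i, Θ i, ∃ a, a ∈ Fintype.piFinset (fun i => Act i (θ i)) ∧
      (Fintype.piFinset fun i => Act i (θ i)).sup'
        (Fintype.piFinset_nonempty.mpr fun i => hAne i (θ i))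
        (fun a => f (Finset.univ.image a)) = f (Finset.univ.image a) := by
    intro θ
    obtain ⟨a, ha, he⟩ := Finset.exists_mem_eq_sup'
      (Fintype.piFinset_nonempty.mpr fun i => hAne i (θ i)) (fun a => f (Finset.univ.image a))
    exact ⟨a, ha, he⟩
  choose opt hoptmem hoptval using hoptex
  have hoptm : ∀ (θ : ∀ i, Θ i) (i : Fin n), opt θ i ∈ Act i (θ i) :=
    fun θ i => (Fintype.mem_piFinset.mp (hoptmem θ)) i
  have hOPT : gOPT Act hAne ρ f = ∑ θ, ρ θ * f (Finset.univ.image (opt θ)) := by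
    unfold gOPT
    exact Finset.sum_congr rfl fun θ _ => by rw [hoptval θ]
  -- pointwise smoothness inequality
  have hsmooth : ∀ (θ' θ : ∀ i, Θ i) (s : ∀ i, Θ i → E), (∀ i t, s i t ∈ Act i t) →
      f (Finset.univ.image (opt θ')) - f (Finset.univ.image fun j => s j (θ j))
        ≤ ∑ i, v i (Function.update (fun j => s j (θ j)) i (opt θ' i)) := by
    intro θ' θ s hs
    set a : Fin n → E := fun j => s j (θ j) with ha
    set b : Fin n → E := opt θ' with hb
    have hne : ∀ i : Fin n, b i ∉ (Finset.univ.erase i).image a := by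
      intro i hmem
      obtain ⟨j, hj, hje⟩ := mem_image.mp hmem
      have hji : j ≠ i := (mem_erase.mp hj).1
      have hd := hdisj ⟨i, θ' i⟩ ⟨j, θ j⟩
        (fun h => hji (congrArg Sigma.fst h).symm)
      have hb' : b i ∈ Act j (θ j) := by rw [← hje]; exact hs j (θ j)
      exact (Finset.disjoint_left.mp hd (hoptm θ' i)) hb'
    have hmarg' : ∀ i : Fin n,
        f (insert (b i) ((Finset.univ.erase i).image a)) - f ((Finset.univ.erase i).image a)
          ≤ v i (Function.update a i (b i)) := by
      intro i
      have hc : ∀ j, ∃ t, (Function.update a i (b i)) j ∈ Act j t := by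
        intro j
        rcases eq_or_ne j i with h | h
        · subst h; exact ⟨θ' j, by rw [Function.update_self]; exact hoptm θ' j⟩
        · exact ⟨θ j, by rw [Function.update_of_ne h]; exact hs j (θ j)⟩
      have hm := hmarg _ hc i
      rw [image_update_univ, Function.update_self, Finset.erase_insert (hne i)] at hm
      exact hm
    calc f (Finset.univ.image b) - f (Finset.univ.image a)
        ≤ f (Finset.univ.image a ∪ Finset.univ.image b) - f (Finset.univ.image a) := by
          have := hmono (Finset.subset_union_right :
            Finset.univ.image b ⊆ Finset.univ.image a ∪ Finset.univ.image b)
          linarith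
      _ ≤ ∑ i, (f (insert (b i) ((Finset.univ.erase i).image a))
            - f ((Finset.univ.erase i).image a)) :=
          telescope_aux f hmono hsub a b Finset.univ
      _ ≤ ∑ i, v i (Function.update a i (b i)) :=
          Finset.sum_le_sum fun i _ => hmarg' i
  -- constant-sum helpers
  have hσc : ∀ c : ℝ, ∑ s, σ s * c = c := fun c => by rw [← Finset.sum_mul, hσ1, one_mul]
  have hρc : ∀ c : ℝ, ∑ θ, ρ θ * c = c := fun c => by rw [← Finset.sum_mul, hρ1, one_mul]
  -- expansion of OPT - SW
  have hexp : ∑ θ', ρ θ' * ∑ θ, ρ θ * ∑ s, σ s *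
        (f (Finset.univ.image (opt θ')) - f (Finset.univ.image fun j => s j (θ j)))
      = gOPT Act hAne ρ f
        - ∑ θ, ρ θ * ∑ s, σ s * f (Finset.univ.image fun j => s j (θ j)) := by
    rw [hOPT]
    simp only [mul_sub, Finset.sum_sub_distrib, hσc, hρc]
  -- step 1 : OPT - SW ≤ Lin
  have h1 : gOPT Act hAne ρ f
        - (∑ θ, ρ θ * ∑ s, σ s * f (Finset.univ.image fun j => s j (θ j)))
      ≤ ∑ θ', ρ θ' * ∑ θ, ρ θ * ∑ s, σ s *
          ∑ i, v i (Function.update (fun j => s j (θ j)) i (opt θ' i)) := by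
    rw [← hexp]
    refine Finset.sum_le_sum fun θ' _ => mul_le_mul_of_nonneg_left ?_ (hρ0 θ')
    refine Finset.sum_le_sum fun θ _ => mul_le_mul_of_nonneg_left ?_ (hρ0 θ)
    refine Finset.sum_le_sum fun s _ => ?_
    by_cases h : σ s = 0
    · simp [h]
    · exact mul_le_mul_of_nonneg_left (hsmooth θ' θ s (hσsupp s h)) (hσ0 s)
  -- step 2 : reorder sums
  have h2 : ∑ θ', ρ θ' * ∑ θ, ρ θ * ∑ s, σ s *
        ∑ i, v i (Function.update (fun j => s j (θ j)) i (opt θ' i))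
      = ∑ i, ∑ θ', ρ θ' * ∑ θ, ρ θ * ∑ s, σ s *
          v i (Function.update (fun j => s j (θ j)) i (opt θ' i)) := by
    simp only [Finset.mul_sum]
    exact sum_swap4 _
  -- swap identity weights
  have hw : ∀ (i : Fin n) (θ τ : ∀ j, Θ j),
      ρ (Function.update θ i (τ i)) * ρ (Function.update τ i (θ i)) = ρ θ * ρ τ := by
    intro i θ τ
    simp only [hprod]
    rw [← Finset.prod_mul_distrib, ← Finset.prod_mul_distrib]
    refine Finset.prod_congr rfl fun j _ => ?_
    rcases eq_or_ne j i with h | h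
    · subst h; rw [Function.update_self, Function.update_self, mul_comm]
    · rw [Function.update_of_ne h, Function.update_of_ne h]
  -- step 3 : the swap (independence)
  have h3 : ∀ i : Fin n,
      ∑ θ', ρ θ' * ∑ θ, ρ θ * ∑ s, σ s *
          v i (Function.update (fun j => s j (θ j)) i (opt θ' i))
        = ∑ θ', ρ θ' * ∑ θ, ρ θ * ∑ s, σ s *
            v i (Function.update (fun j => s j (θ j)) i
              (opt (Function.update θ' i (θ i)) i)) := by
    intro i
    simp only [Finset.mul_sum]
    conv_lhs => rw [← Fintype.sum_prod_type']
    conv_rhs => rw [← Fintype.sum_prod_type']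
    have hinv : Function.Involutive (fun p : (∀ j, Θ j) × (∀ j, Θ j) =>
        (Function.update p.1 i (p.2 i), Function.update p.2 i (p.1 i))) := by
      intro p
      simp only [Function.update_self, Function.update_idem, Function.update_eq_self,
        Prod.mk.eta]
    refine Fintype.sum_bijective (fun p : (∀ j, Θ j) × (∀ j, Θ j) =>
        (Function.update p.1 i (p.2 i), Function.update p.2 i (p.1 i)))
        hinv.bijective _ _ fun p => ?_
    dsimp only
    refine Finset.sum_congr rfl fun t _ => ?_
    have harg : Function.update (Function.update p.1 i (p.2 i)) i
        (Function.update p.2 i (p.1 i) i) = p.1 := by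
      rw [Function.update_self, Function.update_idem, Function.update_eq_self]
    have hfun : ∀ x : E,
        (Function.update (fun j => t j (Function.update p.2 i (p.1 i) j)) i x)
          = Function.update (fun j => t j (p.2 j)) i x := by
      intro x
      funext j
      rcases eq_or_ne j i with h | h
      · subst h; rw [Function.update_self, Function.update_self]
      · rw [Function.update_of_ne h, Function.update_of_ne h, Function.update_of_ne h]
    rw [harg, hfun]
    simp only [← mul_assoc]
    rw [hw i p.1 p.2]
  -- step 4 : use the SFCCE property
  have h4 : ∀ i : Fin n,
      ∑ θ', ρ θ' * ∑ θ, ρ θ * ∑ s, σ s *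
          v i (Function.update (fun j => s j (θ j)) i
            (opt (Function.update θ' i (θ i)) i))
        ≤ ∑ θ, ρ θ * ∑ s, σ s * v i (fun j => s j (θ j)) := by
    intro i
    have hdev : ∀ θ' : ∀ j, Θ j,
        ∑ θ, ρ θ * ∑ s, σ s *
            v i (Function.update (fun j => s j (θ j)) i
              (opt (Function.update θ' i (θ i)) i))
          ≤ ∑ θ, ρ θ * ∑ s, σ s * v i (fun j => s j (θ j)) := by
      intro θ'
      refine hSFCCE i (fun t => opt (Function.update θ' i t) i) fun t => ?_
      have := hoptm (Function.update θ' i t) i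
      rwa [Function.update_self] at this
    calc ∑ θ', ρ θ' * ∑ θ, ρ θ * ∑ s, σ s *
            v i (Function.update (fun j => s j (θ j)) i
              (opt (Function.update θ' i (θ i)) i))
        ≤ ∑ θ' : ∀ j, Θ j, ρ θ' * ∑ θ, ρ θ * ∑ s, σ s * v i (fun j => s j (θ j)) :=
          Finset.sum_le_sum fun θ' _ => mul_le_mul_of_nonneg_left (hdev θ') (hρ0 θ')
      _ = ∑ θ, ρ θ * ∑ s, σ s * v i (fun j => s j (θ j)) := hρc _
  -- step 5 : reorder and total utility bound
  have h5 : ∑ i, ∑ θ, ρ θ * ∑ s, σ s * v i (fun j => s j (θ j))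
      = ∑ θ, ρ θ * ∑ s, σ s * ∑ i, v i (fun j => s j (θ j)) := by
    simp only [Finset.mul_sum]
    exact sum_swap3 _
  have htot : ∑ θ, ρ θ * ∑ s, σ s * ∑ i, v i (fun j => s j (θ j))
      ≤ ∑ θ, ρ θ * ∑ s, σ s * f (Finset.univ.image fun j => s j (θ j)) := by
    refine Finset.sum_le_sum fun θ _ => mul_le_mul_of_nonneg_left
      (Finset.sum_le_sum fun s _ => ?_) (hρ0 θ)
    by_cases h : σ s = 0
    · simp [h]
    · exact mul_le_mul_of_nonneg_left
        (htotal _ fun i => ⟨θ i, hσsupp s h i (θ i)⟩) (hσ0 s)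
  -- put everything together
  have hchain : gOPT Act hAne ρ f
        - (∑ θ, ρ θ * ∑ s, σ s * f (Finset.univ.image fun j => s j (θ j)))
      ≤ ∑ θ, ρ θ * ∑ s, σ s * f (Finset.univ.image fun j => s j (θ j)) := by
    calc gOPT Act hAne ρ f
          - (∑ θ, ρ θ * ∑ s, σ s * f (Finset.univ.image fun j => s j (θ j)))
        ≤ ∑ θ', ρ θ' * ∑ θ, ρ θ * ∑ s, σ s *
            ∑ i, v i (Function.update (fun j => s j (θ j)) i (opt θ' i)) := h1
      _ = ∑ i, ∑ θ', ρ θ' * ∑ θ, ρ θ * ∑ s, σ s *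
            v i (Function.update (fun j => s j (θ j)) i (opt θ' i)) := h2
      _ = ∑ i, ∑ θ', ρ θ' * ∑ θ, ρ θ * ∑ s, σ s *
            v i (Function.update (fun j => s j (θ j)) i
              (opt (Function.update θ' i (θ i)) i)) :=
          Finset.sum_congr rfl fun i _ => h3 i
      _ ≤ ∑ i, ∑ θ, ρ θ * ∑ s, σ s * v i (fun j => s j (θ j)) :=
          Finset.sum_le_sum fun i _ => h4 i
      _ = ∑ θ, ρ θ * ∑ s, σ s * ∑ i, v i (fun j => s j (θ j)) := h5
      _ ≤ ∑ θ, ρ θ * ∑ s, σ s * f (Finset.univ.image fun j => s j (θ j)) := htot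
  linarith
end

section
/- Consider a Bayesian game (finite types, finite type-dependent action sets, utility functions v_i : A → ℝ≥0, and social welfare SW : A → ℝ≥0). Suppose that for every type profile θ ∈ Θ there exist α^θ ∈ ℝ and a correlated equilibrium π^θ of the complete-information game at θ satisfying E_{a∼π^θ}[SW(a)] ≥ α^θ · max_{a ∈ A^θ} SW(a). Then the type-dependent distribution π defined by π(θ) = π^θ is a Bayesian solution of the Bayesian game, and it satisfies E_{θ∼ρ}[E_{a∼π(θ)}[SW(a)]] ≥ (min_{θ ∈ Θ} α^θ) · OPT. In particular, the price of stability for Bayesian solutions is at least the minimum over θ of the price of stability for correlated equilibria of the complete-information game at θ. -/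
open Finset

/-- Consider a finite Bayesian game (nonempty finite type sets, nonempty
finite pairwise disjoint type-dependent action sets, nonnegative utilities `v i` and
social welfare `SW`).  Suppose that for every type profile `θ` we are given `α θ ∈ ℝ` and
a correlated equilibrium `πθ θ` of the complete-information game at `θ` with
`E_{a∼πθ θ}[SW a] ≥ α θ · max_{a ∈ A^θ} SW a`.  Then the type-dependent distribution
`θ ↦ πθ θ` is a Bayesian solution, and its expected welfare is at least
`(min_θ α θ) · OPT`.  (The incentive constraints of Bayesian solutions are stated in
their `ρᵢ(θᵢ)`-weighted form, equivalent to the conditional form when `ρᵢ(θᵢ) > 0`.) -/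
theorem correlated_equilibria_glue_to_bayesian_solution
    {n : ℕ} {Θ : Fin n → Type*} [∀ i, Fintype (Θ i)] [∀ i, DecidableEq (Θ i)]
    [∀ i, Nonempty (Θ i)]
    {E : Type*} [Fintype E] [DecidableEq E]
    (Act : ∀ i, Θ i → Finset E) (hAne : ∀ i t, (Act i t).Nonempty)
    (hdisj : ∀ p q : Σ i : Fin n, Θ i, p ≠ q → Disjoint (Act p.1 p.2) (Act q.1 q.2))
    (ρ : (∀ i, Θ i) → ℝ) (hρ0 : ∀ θ, 0 ≤ ρ θ) (hρ1 : ∑ θ, ρ θ = 1)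
    (v : Fin n → (Fin n → E) → ℝ) (hv0 : ∀ i a, 0 ≤ v i a)
    (SW : (Fin n → E) → ℝ) (hSW0 : ∀ a, 0 ≤ SW a)
    (α : (∀ i, Θ i) → ℝ)
    -- for each θ, πθ θ is a distribution supported on A^θ ...
    (πθ : (∀ i, Θ i) → (Fin n → E) → ℝ)
    (hπ0 : ∀ θ a, 0 ≤ πθ θ a) (hπ1 : ∀ θ, ∑ a, πθ θ a = 1)
    (hπsupp : ∀ θ a, πθ θ a ≠ 0 → ∀ i, a i ∈ Act i (θ i))
    -- ... which is a correlated equilibrium of the complete-information game at θ ...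
    (hCE : ∀ θ, ∀ i : Fin n, ∀ φ : E → E, (∀ b ∈ Act i (θ i), φ b ∈ Act i (θ i)) →
      ∑ a, πθ θ a * v i (Function.update a i (φ (a i))) ≤ ∑ a, πθ θ a * v i a)
    -- ... whose welfare is at least α θ times the optimum at θ
    (hα : ∀ θ, α θ * (Fintype.piFinset fun i => Act i (θ i)).sup'
          (Fintype.piFinset_nonempty.mpr fun i => hAne i (θ i)) SW
        ≤ ∑ a, πθ θ a * SW a) :
    -- then θ ↦ πθ θ is a Bayesian solution ...
    (∀ i : Fin n, ∀ tᵢ : Θ i, ∀ φ : E → E,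
      (∀ b ∈ Act i tᵢ, φ b ∈ Act i tᵢ) →
      ∑ θ, (if θ i = tᵢ then ρ θ else 0) *
          ∑ a, πθ θ a * v i (Function.update a i (φ (a i)))
        ≤ ∑ θ, (if θ i = tᵢ then ρ θ else 0) * ∑ a, πθ θ a * v i a) ∧
    -- ... and its expected social welfare is at least (min_θ α θ) · OPT
    (Finset.univ.inf' Finset.univ_nonempty α) *
        (∑ θ, ρ θ * (Fintype.piFinset fun i => Act i (θ i)).sup'
          (Fintype.piFinset_nonempty.mpr fun i => hAne i (θ i)) SW)
      ≤ ∑ θ, ρ θ * ∑ a, πθ θ a * SW a := by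
  constructor
  · intro i tᵢ φ hφ
    refine Finset.sum_le_sum fun θ _ => ?_
    by_cases h : θ i = tᵢ
    · simp only [h, if_pos rfl]
      exact mul_le_mul_of_nonneg_left (hCE θ i φ (h ▸ hφ)) (hρ0 θ)
    · simp [h]
  · rw [Finset.mul_sum]
    refine Finset.sum_le_sum fun θ _ => ?_
    rw [← mul_assoc, mul_comm _ (ρ θ), mul_assoc]
    refine mul_le_mul_of_nonneg_left (le_trans ?_ (hα θ)) (hρ0 θ)
    refine mul_le_mul_of_nonneg_right (Finset.inf'_le α (Finset.mem_univ θ)) ?_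
    obtain ⟨a, ha⟩ := Fintype.piFinset_nonempty.mpr fun i => hAne i (θ i)
    exact le_trans (hSW0 a) (Finset.le_sup' SW ha)
end

section
/- In any Bayesian basic utility game (with an arbitrary, possibly correlated, prior distribution) there exists a Bayesian solution π whose expected social welfare equals the optimum: E_{θ∼ρ}[E_{a∼π(θ)}[SW(a)]] = OPT. Hence the price of stability for Bayesian solutions in Bayesian basic utility games is 1. -/
open Finset

/-- In any Bayesian basic utility game (with an arbitrary, possibly
correlated, prior) there exists a Bayesian solution `π` whose expected social welfare
equals the optimum `OPT`.  Hence the price of stability for Bayesian solutions in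
Bayesian basic utility games is `1`.  (The incentive constraints of Bayesian solutions
are stated in their `ρᵢ(θᵢ)`-weighted form, equivalent to the conditional form whenever
`ρᵢ(θᵢ) > 0`.) -/
theorem basic_game_exists_optimal_bayesian_solution
    {n : ℕ} {Θ : Fin n → Type*} [∀ i, Fintype (Θ i)] [∀ i, DecidableEq (Θ i)]
    [∀ i, Nonempty (Θ i)]
    {E : Type*} [Fintype E] [DecidableEq E]
    (Act : ∀ i, Θ i → Finset E) (hAne : ∀ i t, (Act i t).Nonempty)
    (hdisj : ∀ p q : Σ i : Fin n, Θ i, p ≠ q → Disjoint (Act p.1 p.2) (Act q.1 q.2))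
    (ρ : (∀ i, Θ i) → ℝ) (hρ0 : ∀ θ, 0 ≤ ρ θ) (hρ1 : ∑ θ, ρ θ = 1)
    (f : Finset E → ℝ) (hf0 : ∀ X, 0 ≤ f X)
    (hmono : MonotoneFn f) (hsub : SubmodularFn f)
    -- basic utility game: total utility and marginal contribution with equality
    (v : Fin n → (Fin n → E) → ℝ) (hv0 : ∀ i a, 0 ≤ v i a)
    (htotal : ∀ a : Fin n → E, (∀ i, ∃ t, a i ∈ Act i t) →
      ∑ i, v i a ≤ f (Finset.univ.image a))
    (hmarg : ∀ a : Fin n → E, (∀ i, ∃ t, a i ∈ Act i t) → ∀ i,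
      v i a = f (Finset.univ.image a) - f ((Finset.univ.image a).erase (a i))) :
    ∃ π : (∀ i, Θ i) → (Fin n → E) → ℝ,
      -- π is a type-dependent distribution supported on A^θ
      (∀ θ a, 0 ≤ π θ a) ∧ (∀ θ, ∑ a, π θ a = 1) ∧
      (∀ θ a, π θ a ≠ 0 → ∀ i, a i ∈ Act i (θ i)) ∧
      -- π is a Bayesian solution
      (∀ i : Fin n, ∀ tᵢ : Θ i, ∀ φ : E → E,
        (∀ b ∈ Act i tᵢ, φ b ∈ Act i tᵢ) →
        ∑ θ, (if θ i = tᵢ then ρ θ else 0) *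
            ∑ a, π θ a * v i (Function.update a i (φ (a i)))
          ≤ ∑ θ, (if θ i = tᵢ then ρ θ else 0) * ∑ a, π θ a * v i a) ∧
      -- its expected social welfare equals OPT
      ∑ θ, ρ θ * ∑ a, π θ a * f (Finset.univ.image a) = gOPT Act hAne ρ f := by
  classical
  -- choose, for each type profile θ, an optimal action profile
  have key : ∀ θ : ∀ i, Θ i,
      ∃ a ∈ Fintype.piFinset (fun i => Act i (θ i)),
        (Fintype.piFinset fun i => Act i (θ i)).sup'
          (Fintype.piFinset_nonempty.mpr fun i => hAne i (θ i))
          (fun a => f (Finset.univ.image a)) = f (Finset.univ.image a) :=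
    fun θ => Finset.exists_mem_eq_sup' _ _
  choose astar hmem hopt using key
  have hmem' : ∀ θ j, astar θ j ∈ Act j (θ j) := fun θ j =>
    (Fintype.mem_piFinset.mp (hmem θ)) j
  refine ⟨fun θ a => if a = astar θ then 1 else 0, ?_, ?_, ?_, ?_, ?_⟩
  · intro θ a; dsimp only; split <;> norm_num
  · intro θ; simp
  · intro θ a ha i
    by_cases h : a = astar θ
    · subst h; exact hmem' θ i
    · simp [h] at ha
  all_goals {
    have hsum : ∀ (θ : ∀ i, Θ i) (g : (Fin n → E) → ℝ),
        ∑ a, (if a = astar θ then (1:ℝ) else 0) * g a = g (astar θ) := by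
      intro θ g
      simp [ite_mul]
    -- key pointwise fact: unilateral deviations from the optimum do not help
    have hdev : ∀ (θ : ∀ i, Θ i) (i : Fin n) (b : E), b ∈ Act i (θ i) →
        v i (Function.update (astar θ) i b) ≤ v i (astar θ) := by
      intro θ i b hb
      set a := astar θ with ha_def
      have ha : ∀ j, a j ∈ Act j (θ j) := hmem' θ
      set a' := Function.update a i b with ha'_def
      have ha' : ∀ j, a' j ∈ Act j (θ j) := by
        intro j
        by_cases h : j = i
        · subst h; simpa [ha'_def] using hb
        · simpa [ha'_def, Function.update_of_ne h] using ha j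
      set T : Finset E := (Finset.univ.erase i).image a with hT
      have hT' : (Finset.univ.erase i).image a' = T := by
        refine Finset.image_congr ?_
        intro j hj
        exact Function.update_of_ne (Finset.ne_of_mem_erase hj) _ _
      have himg : ∀ c : Fin n → E,
          Finset.univ.image c = insert (c i) ((Finset.univ.erase i).image c) := by
        intro c
        conv_lhs => rw [← Finset.insert_erase (Finset.mem_univ i)]
        rw [Finset.image_insert]
      have hni : ∀ c : Fin n → E, (∀ j, c j ∈ Act j (θ j)) →
          c i ∉ (Finset.univ.erase i).image c := by
        intro c hc hmemc
        obtain ⟨j, hj, hje⟩ := Finset.mem_image.mp hmemc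
        have hji : j ≠ i := Finset.ne_of_mem_erase hj
        have hd := hdisj ⟨j, θ j⟩ ⟨i, θ i⟩ (fun h => hji (congrArg Sigma.fst h))
        exact Finset.disjoint_left.mp hd (hc j) (hje ▸ hc i)
      have hEa : (Finset.univ.image a).erase (a i) = T := by
        rw [himg a, Finset.erase_insert (hni a ha)]
      have hEa' : (Finset.univ.image a').erase (a' i) = T := by
        rw [himg a', Finset.erase_insert (hni a' ha'), hT']
      have hva : v i a = f (Finset.univ.image a) - f T := by
        rw [hmarg a (fun j => ⟨θ j, ha j⟩) i, hEa]
      have hva' : v i a' = f (Finset.univ.image a') - f T := by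
        rw [hmarg a' (fun j => ⟨θ j, ha' j⟩) i, hEa']
      have hle : f (Finset.univ.image a') ≤ f (Finset.univ.image a) := by
        rw [ha_def, ← hopt θ]
        exact Finset.le_sup' (fun a => f (Finset.univ.image a)) (Fintype.mem_piFinset.mpr ha')
      rw [hva, hva']
      linarith
    first
    | -- Bayesian solution condition
      (intro i tᵢ φ hφ
       refine Finset.sum_le_sum fun θ _ => ?_
       by_cases h : θ i = tᵢ
       · rw [if_pos h, hsum, hsum]
         refine mul_le_mul_of_nonneg_left ?_ (hρ0 θ)
         refine hdev θ i (φ (astar θ i)) ?_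
         have h1 : astar θ i ∈ Act i tᵢ := h ▸ hmem' θ i
         have h2 := hφ _ h1
         rw [h]
         exact h2
       · rw [if_neg h]; simp)
    | -- expected social welfare equals OPT
      (rw [gOPT]
       refine Finset.sum_congr rfl fun θ _ => ?_
       rw [hsum, hopt θ])
  }
end

section
/- The strategic form of any Bayesian basic utility game is a (complete-information) basic utility game. Precisely: let E' = S_1 ∪ … ∪ S_n be the disjoint union of the players' strategy sets and define f' : 2^{E'} → ℝ≥0 by f'(X) = E_{θ∼ρ}[ f( ∪_{i} { s_i(θ_i) : s_i ∈ X ∩ S_i } ) ]. Then f' is nonnegative, monotone and submodular; f'({s_1,…,s_n}) = E_{θ∼ρ}[SW(s(θ))] for every strategy profile s; the total utility condition Σ_i E_{θ∼ρ}[v_i(s(θ))] ≤ E_{θ∼ρ}[SW(s(θ))] holds for every s ∈ S; and the marginal contribution condition holds with equality: E_{θ∼ρ}[v_i(s(θ))] = f'({s_1,…,s_n}) − f'({s_1,…,s_n} ∖ {s_i}) for every s ∈ S and every player i. -/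
open Finset

private lemma marg_mono {α : Type*} [DecidableEq α] {f : Finset α → ℝ}
    (hmono : MonotoneFn f) (hsub : SubmodularFn f)
    {X Y : Finset α} (hXY : X ⊆ Y) (u : α) :
    f (insert u Y) - f Y ≤ f (insert u X) - f X := by
  by_cases hu : u ∈ Y
  · rw [Finset.insert_eq_self.mpr hu, sub_self]
    have := hmono (Finset.subset_insert u X)
    linarith
  · exact hsub hXY u hu

/-- The strategic form of any Bayesian basic utility game is a
(complete-information) basic utility game.  Here the ground set `E'` is the disjoint
union `Σ i, S_i` of the strategy sets `S_i = {s : Θ i → E // ∀ t, s t ∈ A_i^t}`, and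
`f' X = E_{θ∼ρ}[f (∪_i {s_i (θ i) : s_i ∈ X ∩ S_i})]`.  Then: `f'` is nonnegative,
monotone and submodular; `f' {s_1,…,s_n} = E_{θ∼ρ}[SW (s θ)]`; the total utility
condition holds; and the marginal contribution condition holds with equality. -/
theorem strategic_form_of_basic_is_basic
    {n : ℕ} {Θ : Fin n → Type*} [∀ i, Fintype (Θ i)] [∀ i, DecidableEq (Θ i)]
    [∀ i, Nonempty (Θ i)]
    {E : Type*} [Fintype E] [DecidableEq E]
    (Act : ∀ i, Θ i → Finset E) (hAne : ∀ i t, (Act i t).Nonempty)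
    (hdisj : ∀ p q : Σ i : Fin n, Θ i, p ≠ q → Disjoint (Act p.1 p.2) (Act q.1 q.2))
    (ρ : (∀ i, Θ i) → ℝ) (hρ0 : ∀ θ, 0 ≤ ρ θ) (hρ1 : ∑ θ, ρ θ = 1)
    (f : Finset E → ℝ) (hf0 : ∀ X, 0 ≤ f X)
    (hmono : MonotoneFn f) (hsub : SubmodularFn f)
    -- basic utility game: total utility and marginal contribution with equality
    (v : Fin n → (Fin n → E) → ℝ) (hv0 : ∀ i a, 0 ≤ v i a)
    (htotal : ∀ a : Fin n → E, (∀ i, ∃ t, a i ∈ Act i t) →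
      ∑ i, v i a ≤ f (Finset.univ.image a))
    (hmarg : ∀ a : Fin n → E, (∀ i, ∃ t, a i ∈ Act i t) → ∀ i,
      v i a = f (Finset.univ.image a) - f ((Finset.univ.image a).erase (a i)))
    -- f' is the social welfare function of the strategic form
    (f' : Finset (Σ i : Fin n, {s : Θ i → E // ∀ t, s t ∈ Act i t}) → ℝ)
    (hf'def : ∀ X, f' X = ∑ θ, ρ θ * f (X.image fun p => p.2.1 (θ p.1))) :
    -- f' is nonnegative, monotone and submodular
    (∀ X, 0 ≤ f' X) ∧ MonotoneFn f' ∧ SubmodularFn f' ∧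
    -- f' {s_1,…,s_n} is the expected social welfare of the strategy profile s
    (∀ s : ∀ i, {s : Θ i → E // ∀ t, s t ∈ Act i t},
      f' (Finset.univ.image fun i =>
          (⟨i, s i⟩ : Σ i : Fin n, {s : Θ i → E // ∀ t, s t ∈ Act i t}))
        = ∑ θ, ρ θ * f (Finset.univ.image fun i => (s i).1 (θ i))) ∧
    -- total utility condition of the strategic form
    (∀ s : ∀ i, {s : Θ i → E // ∀ t, s t ∈ Act i t},
      ∑ i, ∑ θ, ρ θ * v i (fun j => (s j).1 (θ j))
        ≤ ∑ θ, ρ θ * f (Finset.univ.image fun i => (s i).1 (θ i))) ∧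
    -- marginal contribution condition of the strategic form, with equality
    (∀ s : ∀ i, {s : Θ i → E // ∀ t, s t ∈ Act i t}, ∀ i : Fin n,
      ∑ θ, ρ θ * v i (fun j => (s j).1 (θ j))
        = f' (Finset.univ.image fun j =>
              (⟨j, s j⟩ : Σ i : Fin n, {s : Θ i → E // ∀ t, s t ∈ Act i t}))
          - f' ((Finset.univ.image fun j =>
              (⟨j, s j⟩ : Σ i : Fin n, {s : Θ i → E // ∀ t, s t ∈ Act i t})).erase
                ⟨i, s i⟩)) := by
  have sigmainj : ∀ (s : ∀ i, {s : Θ i → E // ∀ t, s t ∈ Act i t}),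
      Function.Injective (fun j => (⟨j, s j⟩ : Σ i : Fin n, {s : Θ i → E // ∀ t, s t ∈ Act i t})) := by
    intro s j k h
    exact congrArg Sigma.fst h
  have ainj : ∀ (s : ∀ i, {s : Θ i → E // ∀ t, s t ∈ Act i t}) (θ : ∀ i, Θ i),
      Function.Injective (fun j => (s j).1 (θ j)) := by
    intro s θ j k h
    by_contra hjk
    have hd := hdisj ⟨j, θ j⟩ ⟨k, θ k⟩ (by simp [hjk])
    refine Finset.disjoint_left.mp hd ((s j).2 (θ j)) ?_
    rw [show (s j).1 (θ j) = (s k).1 (θ k) from h]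
    exact (s k).2 (θ k)
  have hmem : ∀ (s : ∀ i, {s : Θ i → E // ∀ t, s t ∈ Act i t}) (θ : ∀ i, Θ i),
      ∀ i, ∃ t, (fun j => (s j).1 (θ j)) i ∈ Act i t := fun s θ i => ⟨θ i, (s i).2 (θ i)⟩
  refine ⟨?_, ?_, ?_, ?_, ?_, ?_⟩
  · intro X
    rw [hf'def]
    exact Finset.sum_nonneg fun θ _ => mul_nonneg (hρ0 θ) (hf0 _)
  · intro X Y h
    rw [hf'def, hf'def]
    exact Finset.sum_le_sum fun θ _ =>
      mul_le_mul_of_nonneg_left (hmono (Finset.image_subset_image h)) (hρ0 θ)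
  · intro X Y hXY u hu
    simp only [hf'def, ← Finset.sum_sub_distrib, ← mul_sub]
    refine Finset.sum_le_sum fun θ _ => mul_le_mul_of_nonneg_left ?_ (hρ0 θ)
    rw [Finset.image_insert, Finset.image_insert]
    exact marg_mono hmono hsub (Finset.image_subset_image hXY) _
  · intro s
    rw [hf'def]
    simp only [Finset.image_image]
    rfl
  · intro s
    rw [Finset.sum_comm]
    refine Finset.sum_le_sum fun θ _ => ?_
    rw [← Finset.mul_sum]
    exact mul_le_mul_of_nonneg_left (htotal _ (hmem s θ)) (hρ0 θ)
  · intro s i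
    rw [hf'def, hf'def, ← Finset.sum_sub_distrib]
    refine Finset.sum_congr rfl fun θ _ => ?_
    rw [← mul_sub]
    congr 1
    have h1 : ((Finset.univ.image fun j =>
        (⟨j, s j⟩ : Σ i : Fin n, {s : Θ i → E // ∀ t, s t ∈ Act i t})).image
          fun p => p.2.1 (θ p.1)) = Finset.univ.image fun j => (s j).1 (θ j) := by
      rw [Finset.image_image]; rfl
    have h2 : (((Finset.univ.image fun j =>
        (⟨j, s j⟩ : Σ i : Fin n, {s : Θ i → E // ∀ t, s t ∈ Act i t})).erase
          ⟨i, s i⟩).image fun p => p.2.1 (θ p.1))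
        = (Finset.univ.image fun j => (s j).1 (θ j)).erase ((s i).1 (θ i)) := by
      rw [← Finset.image_erase (sigmainj s), Finset.image_image,
        ← Finset.image_erase (ainj s θ)]
      rfl
    rw [h1, h2]
    exact hmarg _ (hmem s θ) i
end

section
/- In any Bayesian basic utility game, any strategy profile s* maximizing the expected social welfare E_{θ∼ρ}[SW(s(θ))] over all strategy profiles s ∈ S is a pure Bayes–Nash equilibrium: for every player i and every strategy s'_i ∈ S_i, E_{θ∼ρ}[v_i(s*(θ))] ≥ E_{θ∼ρ}[v_i(s'_i(θ_i), s*_{−i}(θ_{−i}))]. Consequently, there exists a Bayes–Nash equilibrium whose expected social welfare equals STR, so the price of stability for Bayes–Nash equilibria in Bayesian basic utility games is at least the strategy representability gap STR/OPT. -/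
open Finset

/-- In any Bayesian basic utility game, any strategy profile `s*`
maximizing the expected social welfare over all strategy profiles is a pure Bayes–Nash
equilibrium: no player `i` can profit by unilaterally switching to another strategy
`sᵢ'`.  Consequently its expected social welfare equals `STR`, so the price of stability
for Bayes–Nash equilibria is at least the strategy representability gap `STR/OPT`. -/
theorem optimal_strategy_profile_is_bayes_nash
    {n : ℕ} {Θ : Fin n → Type*} [∀ i, Fintype (Θ i)] [∀ i, DecidableEq (Θ i)]
    [∀ i, Nonempty (Θ i)]
    {E : Type*} [Fintype E] [DecidableEq E]
    (Act : ∀ i, Θ i → Finset E) (hAne : ∀ i t, (Act i t).Nonempty)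
    (hdisj : ∀ p q : Σ i : Fin n, Θ i, p ≠ q → Disjoint (Act p.1 p.2) (Act q.1 q.2))
    (ρ : (∀ i, Θ i) → ℝ) (hρ0 : ∀ θ, 0 ≤ ρ θ) (hρ1 : ∑ θ, ρ θ = 1)
    (f : Finset E → ℝ) (hf0 : ∀ X, 0 ≤ f X)
    (hmono : MonotoneFn f) (hsub : SubmodularFn f)
    -- basic utility game: total utility and marginal contribution with equality
    (v : Fin n → (Fin n → E) → ℝ) (hv0 : ∀ i a, 0 ≤ v i a)
    (htotal : ∀ a : Fin n → E, (∀ i, ∃ t, a i ∈ Act i t) →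
      ∑ i, v i a ≤ f (Finset.univ.image a))
    (hmarg : ∀ a : Fin n → E, (∀ i, ∃ t, a i ∈ Act i t) → ∀ i,
      v i a = f (Finset.univ.image a) - f ((Finset.univ.image a).erase (a i)))
    -- s* is a strategy profile maximizing the expected social welfare
    (s : ∀ i, Θ i → E) (hsmem : ∀ i t, s i t ∈ Act i t)
    (hsmax : ∀ s' : ∀ i, Θ i → E, (∀ i t, s' i t ∈ Act i t) →
      ∑ θ, ρ θ * f (Finset.univ.image fun j => s' j (θ j))
        ≤ ∑ θ, ρ θ * f (Finset.univ.image fun j => s j (θ j))) :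
    -- then s* is a pure Bayes–Nash equilibrium ...
    (∀ i : Fin n, ∀ sᵢ' : Θ i → E, (∀ t, sᵢ' t ∈ Act i t) →
      ∑ θ, ρ θ * v i (Function.update (fun j => s j (θ j)) i (sᵢ' (θ i)))
        ≤ ∑ θ, ρ θ * v i (fun j => s j (θ j))) ∧
    -- ... and its expected social welfare equals STR
    ∑ θ, ρ θ * f (Finset.univ.image fun j => s j (θ j)) = gSTR Act hAne ρ f := by

  have hinj : ∀ (a : Fin n → E), (∀ j, ∃ t, a j ∈ Act j t) → Function.Injective a := by
    intro a ha j k hjk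
    by_contra hne
    obtain ⟨t, ht⟩ := ha j
    obtain ⟨u, hu⟩ := ha k
    have hd := hdisj ⟨j, t⟩ ⟨k, u⟩ (fun h => hne (congrArg Sigma.fst h))
    exact (Finset.disjoint_left.mp hd ht) (hjk ▸ hu)
  constructor
  · intro i sᵢ' hs'i
    set s' : ∀ j, Θ j → E := Function.update s i sᵢ' with hs'def
    have hs'mem : ∀ j t, s' j t ∈ Act j t := by
      intro j t
      by_cases h : j = i
      · subst h; simp only [s', Function.update_self]; exact hs'i t
      · simp only [s', Function.update_of_ne h]; exact hsmem j t
    have key : ∀ θ : ∀ i, Θ i,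
        v i (Function.update (fun j => s j (θ j)) i (sᵢ' (θ i)))
          - v i (fun j => s j (θ j))
        = f (Finset.univ.image fun j => s' j (θ j))
          - f (Finset.univ.image fun j => s j (θ j)) := by
      intro θ
      have hb : Function.update (fun j => s j (θ j)) i (sᵢ' (θ i))
          = fun j => s' j (θ j) := by
        funext j
        by_cases h : j = i
        · subst h; simp [s']
        · simp [s', Function.update_of_ne h]
      rw [hb]
      set a : Fin n → E := fun j => s j (θ j) with ha
      set b : Fin n → E := fun j => s' j (θ j) with hbdef
      have haA : ∀ j, ∃ t, a j ∈ Act j t := fun j => ⟨θ j, hsmem j (θ j)⟩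
      have hbA : ∀ j, ∃ t, b j ∈ Act j t := fun j => ⟨θ j, hs'mem j (θ j)⟩
      rw [hmarg a haA i, hmarg b hbA i]
      have ea : (Finset.univ.image a).erase (a i) = (Finset.univ.erase i).image a :=
        (Finset.image_erase (hinj a haA) _ _).symm
      have eb : (Finset.univ.image b).erase (b i) = (Finset.univ.erase i).image b :=
        (Finset.image_erase (hinj b hbA) _ _).symm
      have hab : (Finset.univ.erase i).image a = (Finset.univ.erase i).image b := by
        apply Finset.image_congr
        intro j hj
        have hji : j ≠ i := Finset.ne_of_mem_erase hj
        simp [a, b, s', Function.update_of_ne hji]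
      rw [ea, eb, hab]; ring
    have step : ∀ θ : ∀ i, Θ i,
        ρ θ * v i (Function.update (fun j => s j (θ j)) i (sᵢ' (θ i)))
        = ρ θ * v i (fun j => s j (θ j))
          + (ρ θ * f (Finset.univ.image fun j => s' j (θ j))
             - ρ θ * f (Finset.univ.image fun j => s j (θ j))) := by
      intro θ
      have h := congrArg (fun x => ρ θ * x) (key θ)
      simp only [mul_sub] at h
      linarith
    calc ∑ θ, ρ θ * v i (Function.update (fun j => s j (θ j)) i (sᵢ' (θ i)))
        = ∑ θ, (ρ θ * v i (fun j => s j (θ j))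
            + (ρ θ * f (Finset.univ.image fun j => s' j (θ j))
               - ρ θ * f (Finset.univ.image fun j => s j (θ j)))) :=
          Finset.sum_congr rfl fun θ _ => step θ
      _ = (∑ θ, ρ θ * v i (fun j => s j (θ j)))
          + ((∑ θ, ρ θ * f (Finset.univ.image fun j => s' j (θ j)))
             - (∑ θ, ρ θ * f (Finset.univ.image fun j => s j (θ j)))) := by
          rw [Finset.sum_add_distrib, Finset.sum_sub_distrib]
      _ ≤ ∑ θ, ρ θ * v i (fun j => s j (θ j)) := by
          linarith [hsmax s' hs'mem]
  · unfold gSTR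
    apply le_antisymm
    · have hmem : s ∈ Fintype.piFinset fun i => Fintype.piFinset fun t : Θ i => Act i t := by
        rw [Fintype.mem_piFinset]
        intro i
        rw [Fintype.mem_piFinset]
        exact hsmem i
      exact Finset.le_sup'
        (fun s' : ∀ i, Θ i → E => ∑ θ, ρ θ * f (Finset.univ.image fun i => s' i (θ i))) hmem
    · apply Finset.sup'_le
      intro s' hs'
      exact hsmax s' fun i t => Fintype.mem_piFinset.mp (Fintype.mem_piFinset.mp hs' i) t
end
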